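/- arXiv:0801.3306 — 4 statements merged into one kernel-verified Lean document; each statement's English description precedes it below -/
import Mathlib

section
/- Let G be a digraph, let σ₀, σ₁, …, σₙ be a sequence of chip configurations on G, each a successor of the one before, and let σ'₀, σ'₁, …, σ'ₘ be another such sequence with σ'₀ = σ₀. (1) If σₙ is stable, then m ≤ n, and no vertex fires more times in the sequence σ'₀,…,σ'ₘ than in σ₀,…,σₙ. (2) If σₙ and σ'ₘ are both stable, then m = n, σₙ = σ'ₘ, and each vertex fires the same number of times in both firing sequences. -/
/-!
Chip-firing on a finite directed multigraph (Holroyd–Levine–Mészáros–Peres–Propp–Wilson,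
Lemma 2.2, "abelian property of chip-firing").

A digraph is given by finite types `V` (vertices) and `E` (edges) together with
maps `tail head : E → V`.  A chip configuration assigns a natural number of chips
to each non-sink vertex.  Firing an active vertex `v` (one with at least `outdeg v`
chips) sends one chip along each outgoing edge of `v`.
-/

/-- The out-degree of a vertex. -/
def outdeg {V E : Type} [Fintype E] [DecidableEq V] (tail : E → V) (v : V) : ℕ :=
  (Finset.univ.filter (fun e => tail e = v)).card

/-- The number of edges from `v` to `w`. -/
def numEdges {V E : Type} [Fintype E] [DecidableEq V] (tail head : E → V) (v w : V) : ℕ :=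
  (Finset.univ.filter (fun e => tail e = v ∧ head e = w)).card

/-- The (sub)type of non-sink vertices. -/
abbrev NonSink {V E : Type} [Fintype E] [DecidableEq V] (tail : E → V) : Type :=
  {v : V // outdeg tail v ≠ 0}

/-- Firing the vertex `v`: `v` loses `outdeg v` chips and sends one chip along each
outgoing edge (chips sent to sinks disappear from the configuration, which records
only non-sink vertices). -/
def fire {V E : Type} [Fintype E] [DecidableEq V] (tail head : E → V)
    (σ : NonSink tail → ℕ) (v : NonSink tail) : NonSink tail → ℕ :=
  fun w =>
    if w = v then σ v + numEdges tail head v.1 v.1 - outdeg tail v.1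
    else σ w + numEdges tail head v.1 w.1

/-- A non-sink vertex is active when it has at least as many chips as outgoing edges. -/
def Active {V E : Type} [Fintype E] [DecidableEq V] (tail : E → V)
    (σ : NonSink tail → ℕ) (v : NonSink tail) : Prop :=
  outdeg tail v.1 ≤ σ v

/-- The result of firing the vertices in the list `l` in order, starting from `σ`. -/
def fireList {V E : Type} [Fintype E] [DecidableEq V] (tail head : E → V)
    (σ : NonSink tail → ℕ) : List (NonSink tail) → (NonSink tail → ℕ)
  | [] => σ
  | v :: l => fireList tail head (fire tail head σ v) l

/-- The firing sequence `l` is legal from `σ`: each fired vertex is active when fired,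
so that each configuration is a successor of the previous one. -/
def Legal {V E : Type} [Fintype E] [DecidableEq V] (tail head : E → V)
    (σ : NonSink tail → ℕ) : List (NonSink tail) → Prop
  | [] => True
  | v :: l => Active tail σ v ∧ Legal tail head (fire tail head σ v) l

/-- A configuration is stable when no non-sink vertex is active. -/
def Stable {V E : Type} [Fintype E] [DecidableEq V] (tail : E → V)
    (σ : NonSink tail → ℕ) : Prop :=
  ∀ v, σ v < outdeg tail v.1

/-!
Proof idea: firing two active vertices in either order gives the same configuration, and an active
vertex stays active while other vertices fire. Hence a vertex active at the start of a legal
stabilizing sequence must fire somewhere in it (else it would still be active at the end) and can be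
moved to the front. Peeling off the vertices of any other legal sequence one at a time in this way
shows that it is a prefix of a rearrangement of the stabilizing sequence with the same final
configuration; when it is itself stabilizing, nothing remains to be fired.
-/

section Firing

variable {V E : Type} [Fintype E] [DecidableEq V] {tail head : E → V}

theorem Active.fire_of_ne {σ : NonSink tail → ℕ} {u v : NonSink tail}
    (hu : Active tail σ u) (huv : u ≠ v) : Active tail (fire tail head σ v) u := by
  unfold Active fire at *
  rw [if_neg huv]
  omega

-- Activity of both vertices keeps the truncated subtraction in `fire` exact.
theorem fire_comm {σ : NonSink tail → ℕ} {v w : NonSink tail}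
    (hv : Active tail σ v) (hw : Active tail σ w) :
    fire tail head (fire tail head σ v) w = fire tail head (fire tail head σ w) v := by
  unfold Active at hv hw
  funext u
  simp only [fire]
  split_ifs <;> subst_vars <;> first | omega | simp_all

theorem Stable.not_active {σ : NonSink tail → ℕ} (hσ : Stable tail σ) (v : NonSink tail) :
    ¬ Active tail σ v :=
  Nat.not_le.mpr (hσ v)

theorem Legal.eq_nil_of_stable {σ : NonSink tail → ℕ} {l : List (NonSink tail)}
    (hl : Legal tail head σ l) (hσ : Stable tail σ) : l = [] := by
  cases l with
  | nil => rfl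
  | cons v _ => exact absurd hl.1 (hσ.not_active v)

theorem Legal.exchange {σ : NonSink tail → ℕ} {v : NonSink tail} {l : List (NonSink tail)}
    (hl : Legal tail head σ l) (hs : Stable tail (fireList tail head σ l))
    (hv : Active tail σ v) :
    v ∈ l ∧ Legal tail head (fire tail head σ v) (l.erase v) ∧
      fireList tail head (fire tail head σ v) (l.erase v) = fireList tail head σ l := by
  induction l generalizing σ with
  | nil => exact absurd hv (hs.not_active v)
  | cons w t ih =>
    obtain ⟨hw, ht⟩ := hl
    by_cases hvw : v = w
    · subst hvw
      simp only [List.erase_cons_head]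
      exact ⟨List.mem_cons_self, ht, rfl⟩
    obtain ⟨hmem, hleg, heq⟩ := ih ht hs (hv.fire_of_ne hvw)
    rw [List.erase_cons_tail (by simpa [Subtype.ext_iff] using Ne.symm hvw)]
    refine ⟨List.mem_cons_of_mem w hmem, ⟨hw.fire_of_ne (Ne.symm hvw), ?_⟩, ?_⟩
    · rwa [fire_comm hv hw]
    · simp only [fireList]
      rwa [fire_comm hv hw]

theorem Legal.exists_perm_append {σ : NonSink tail → ℕ} {l l' : List (NonSink tail)}
    (hl : Legal tail head σ l) (hs : Stable tail (fireList tail head σ l))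
    (hl' : Legal tail head σ l') :
    ∃ r, (l' ++ r).Perm l ∧ Legal tail head (fireList tail head σ l') r ∧
      fireList tail head (fireList tail head σ l') r = fireList tail head σ l := by
  induction l' generalizing σ l with
  | nil => exact ⟨l, List.Perm.refl l, hl, rfl⟩
  | cons v t ih =>
    obtain ⟨hv, ht⟩ := hl'
    obtain ⟨hmem, hleg, heq⟩ := hl.exchange hs hv
    obtain ⟨r, hperm, hr, hfin⟩ := ih hleg (heq ▸ hs) ht
    exact ⟨r, (hperm.cons v).trans (List.perm_cons_erase hmem).symm, hr, hfin.trans heq⟩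

end Firing

theorem chip_firing_abelian_property_general
    {V E : Type} [DecidableEq V] [Fintype E]
    (tail head : E → V)
    (σ₀ : NonSink tail → ℕ)
    (l l' : List (NonSink tail))
    (hl : Legal tail head σ₀ l) (hl' : Legal tail head σ₀ l')
    (hstable : Stable tail (fireList tail head σ₀ l)) :
    (l'.length ≤ l.length ∧ ∀ v, l'.count v ≤ l.count v) ∧
      (Stable tail (fireList tail head σ₀ l') →
        l'.length = l.length ∧
        fireList tail head σ₀ l' = fireList tail head σ₀ l ∧
        ∀ v, l'.count v = l.count v) := by
  obtain ⟨r, hperm, hr, hfin⟩ := hl.exists_perm_append hstable hl'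
  have hsub : l'.Subperm l := (List.sublist_append_left l' r).subperm.trans hperm.subperm
  refine ⟨⟨hsub.length_le, fun v => hsub.count_le v⟩, fun hs' => ?_⟩
  obtain rfl := hr.eq_nil_of_stable hs'
  rw [List.append_nil] at hperm
  exact ⟨hperm.length_eq, hfin, fun v => hperm.count_eq v⟩

/-- **Abelian property of chip-firing.**  If `σ₀, …, σₙ` is a legal firing sequence
ending in a stable configuration, and `σ'₀, …, σ'ₘ` is any legal firing sequence with
the same start, then (1) `m ≤ n` and no vertex fires more times in the second sequence
than in the first; (2) if the second sequence also ends in a stable configuration,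
then `m = n`, the final configurations coincide, and each vertex fires the same number
of times in both histories. -/
theorem chip_firing_abelian_property
    {V E : Type} [Fintype V] [DecidableEq V] [Fintype E]
    (tail head : E → V)
    (σ₀ : NonSink tail → ℕ)
    (l l' : List (NonSink tail))
    (hl : Legal tail head σ₀ l) (hl' : Legal tail head σ₀ l')
    (hstable : Stable tail (fireList tail head σ₀ l)) :
    (l'.length ≤ l.length ∧ ∀ v, l'.count v ≤ l.count v) ∧
      (Stable tail (fireList tail head σ₀ l') →
        l'.length = l.length ∧
        fireList tail head σ₀ l' = fireList tail head σ₀ l ∧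
        ∀ v, l'.count v = l.count v) :=
  chip_firing_abelian_property_general tail head σ₀ l l' hl hl' hstable
end

section
/- If G is a digraph with a global sink, then every chip configuration on G stabilizes: from any chip configuration, some finite sequence of firings of active vertices reaches a stable configuration (and consequently no infinite sequence of firings is possible). -/
/-!
Firing never increases the number of chips on the non-sink vertices, and strictly decreases it
when the fired vertex has an edge to a sink. In an infinite firing sequence some vertex fires
infinitely often, as there are finitely many non-sinks. If `a` fires infinitely often and `a → c`
is an edge, then `c` is not a sink (the total would drop infinitely often) and `c` fires
infinitely often (otherwise `c` eventually gains a chip at every firing of `a` and never loses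
any, exceeding the bounded total). Following a path from `a` to the global sink gives a
contradiction. Hence the firing relation is well founded, and a maximal legal firing sequence
ends in a stable configuration.
-/

open Filter

section Firing

variable {V E : Type} [Fintype E] [DecidableEq V] (tail head : E → V)

theorem outdeg_ne_zero_iff_mem_range (v : V) : outdeg tail v ≠ 0 ↔ v ∈ Set.range tail := by
  simp [outdeg]

instance finite_nonSink : Finite (NonSink tail) :=
  ((Set.finite_range tail).subset fun v hv => (outdeg_ne_zero_iff_mem_range tail v).1 hv).to_subtype

def numSinkEdges (v : V) : ℕ :=
  (Finset.univ.filter (fun e => tail e = v ∧ outdeg tail (head e) = 0)).card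

def totalChips [Fintype (NonSink tail)] (σ : NonSink tail → ℕ) : ℕ := ∑ w, σ w

theorem outdeg_eq_numSinkEdges_add_sum_numEdges [Fintype (NonSink tail)] (v : V) :
    outdeg tail v = numSinkEdges tail head v + ∑ w : NonSink tail, numEdges tail head v w.1 := by
  let target : E → Option (NonSink tail) := fun e =>
    if h : outdeg tail (head e) = 0 then none else some ⟨head e, h⟩
  rw [outdeg, Finset.card_eq_sum_card_fiberwise (f := target) (t := Finset.univ) (by simp),
    Fintype.sum_option]
  congr 1
  · rw [numSinkEdges, Finset.filter_filter]
    congr! 3 with e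
    simp [target]
  · refine Finset.sum_congr rfl fun w _ => ?_
    rw [numEdges, Finset.filter_filter]
    congr! 3 with e
    by_cases h : outdeg tail (head e) = 0
    · simp only [target, h, dite_true, reduceCtorEq, false_iff]
      exact fun hw => w.2 (hw ▸ h)
    · simp [target, h, Subtype.ext_iff]

variable {tail} {σ : NonSink tail → ℕ} {v : NonSink tail}

theorem fire_apply_of_ne {w : NonSink tail} (h : w ≠ v) :
    fire tail head σ v w = σ w + numEdges tail head v.1 w.1 := by
  rw [fire, if_neg h]

theorem fire_add_single (hv : Active tail σ v) :
    fire tail head σ v + Pi.single v (outdeg tail v.1)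
      = σ + fun w => numEdges tail head v.1 w.1 := by
  ext w
  by_cases h : w = v
  · subst h
    rw [Pi.add_apply, Pi.add_apply, fire, if_pos rfl, Pi.single_eq_same]
    have : outdeg tail w.1 ≤ σ w := hv
    omega
  · simp [fire_apply_of_ne head h, h]

variable [Fintype (NonSink tail)]

theorem le_totalChips (w : NonSink tail) : σ w ≤ totalChips tail σ :=
  Finset.single_le_sum (fun _ _ => Nat.zero_le _) (Finset.mem_univ w)

theorem totalChips_fire_add_numSinkEdges (hv : Active tail σ v) :
    totalChips tail (fire tail head σ v) + numSinkEdges tail head v.1 = totalChips tail σ := by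
  have h := congrArg (fun σ : NonSink tail → ℕ => ∑ w, σ w) (fire_add_single head hv)
  simp only [Pi.add_apply, Finset.sum_add_distrib, Finset.sum_pi_single', Finset.mem_univ,
    if_true] at h
  have := outdeg_eq_numSinkEdges_add_sum_numEdges tail head v.1
  rw [totalChips, totalChips]
  omega

end Firing

theorem not_frequently_lt_succ_of_bounded {f : ℕ → ℕ} {N B : ℕ}
    (hmono : ∀ n ≥ N, f n ≤ f (n + 1)) (hB : ∀ n, f n ≤ B) :
    ¬ ∃ᶠ n in atTop, f n < f (n + 1) := by
  intro hfreq
  have hgrow : ∀ k, ∃ n ≥ N, k ≤ f n := by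
    intro k
    induction k with
    | zero => exact ⟨N, le_rfl, Nat.zero_le _⟩
    | succ k ih =>
      obtain ⟨n, hn, hk⟩ := ih
      obtain ⟨m, hnm, hlt⟩ := frequently_atTop.1 hfreq n
      have := Nat.rel_of_forall_rel_succ_of_le_of_le (· ≤ ·) hmono hn hnm
      exact ⟨m + 1, by omega, by omega⟩
  obtain ⟨n, -, hn⟩ := hgrow (B + 1)
  exact absurd (hB n) (by omega)

section FiringSequence

variable {V E : Type} [Fintype E] [DecidableEq V] {tail head : E → V} [Fintype (NonSink tail)]
  {τ : ℕ → NonSink tail → ℕ} {v : ℕ → NonSink tail}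
  (hact : ∀ n, Active tail (τ n) (v n)) (hfire : ∀ n, τ (n + 1) = fire tail head (τ n) (v n))
include hact hfire

theorem totalChips_succ_add_numSinkEdges (n : ℕ) :
    totalChips tail (τ (n + 1)) + numSinkEdges tail head (v n).1 = totalChips tail (τ n) :=
  hfire n ▸ totalChips_fire_add_numSinkEdges head (hact n)

theorem totalChips_le_totalChips_zero (n : ℕ) : totalChips tail (τ n) ≤ totalChips tail (τ 0) :=
  Nat.rel_of_forall_rel_succ_of_le (· ≥ ·)
    (fun n => (totalChips_succ_add_numSinkEdges hact hfire n).le.trans' (Nat.le_add_right _ _))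
    (Nat.zero_le n)

theorem not_frequently_fire_of_edge_to_sink {a : V} {e : E} (he : tail e = a)
    (hsink : outdeg tail (head e) = 0) : ¬ ∃ᶠ n in atTop, (v n).1 = a := by
  have hpos : numSinkEdges tail head a ≠ 0 :=
    Finset.card_ne_zero_of_mem (Finset.mem_filter.2 ⟨Finset.mem_univ e, he, hsink⟩)
  -- `f n` counts the chips lost to sinks before time `n`.
  refine fun hfreq => not_frequently_lt_succ_of_bounded (N := 0)
    (f := fun n => totalChips tail (τ 0) - totalChips tail (τ n))
    (fun n _ => ?_) (fun n => Nat.sub_le _ _) (hfreq.mono fun n hn => ?_)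
  · have := totalChips_succ_add_numSinkEdges hact hfire n
    omega
  · have := totalChips_succ_add_numSinkEdges hact hfire n
    have := totalChips_le_totalChips_zero hact hfire n
    rw [hn] at *
    omega

theorem frequently_fire_of_frequently_fire_of_edge {a : V} {c : NonSink tail} {e : E}
    (he : tail e = a) (hc : head e = c.1) (hfreq : ∃ᶠ n in atTop, (v n).1 = a) :
    ∃ᶠ n in atTop, v n = c := by
  by_cases hac : a = c.1
  · exact hfreq.mono fun n hn => Subtype.ext (hn.trans hac)
  intro hev
  obtain ⟨N, hN⟩ := eventually_atTop.1 hev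
  have hpos : numEdges tail head a c.1 ≠ 0 :=
    Finset.card_ne_zero_of_mem (Finset.mem_filter.2 ⟨Finset.mem_univ e, he, hc⟩)
  have hgain : ∀ n ≥ N, τ (n + 1) c = τ n c + numEdges tail head (v n).1 c.1 := fun n hn => by
    rw [hfire n, fire_apply_of_ne head (Ne.symm (hN n hn))]
  refine not_frequently_lt_succ_of_bounded (f := fun n => τ n c) (N := N)
    (fun n hn => (hgain n hn).symm ▸ Nat.le_add_right _ _)
    (fun n => (le_totalChips c).trans (totalChips_le_totalChips_zero hact hfire n))
    ((hfreq.and_eventually (eventually_ge_atTop N)).mono fun n ⟨hn, hNn⟩ => ?_)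
  rw [hgain n hNn, hn]
  omega

theorem not_frequently_fire_of_path_to_sink {s : V} (hs : outdeg tail s = 0) {a : V}
    (hpath : Relation.ReflTransGen (fun a b => ∃ e, tail e = a ∧ head e = b) a s) :
    ¬ ∃ᶠ n in atTop, (v n).1 = a := by
  induction hpath using Relation.ReflTransGen.head_induction_on with
  | refl => exact fun hfreq => (hfreq.exists.elim fun n hn => (v n).2 (hn ▸ hs))
  | head hedge _ ih =>
    obtain ⟨e, he, rfl⟩ := hedge
    by_cases hsink : outdeg tail (head e) = 0
    · exact not_frequently_fire_of_edge_to_sink hact hfire he hsink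
    · exact fun hfreq => ih <| (frequently_fire_of_frequently_fire_of_edge hact hfire
        (c := ⟨head e, hsink⟩) he rfl hfreq).mono fun n hn => congrArg Subtype.val hn

end FiringSequence

def FiringStep {V E : Type} [Fintype E] [DecidableEq V] (tail head : E → V)
    (σ σ' : NonSink tail → ℕ) : Prop :=
  ∃ v, Active tail σ v ∧ σ' = fire tail head σ v

theorem not_exists_infinite_firing {V E : Type} [Fintype E] [DecidableEq V] {tail head : E → V}
    {s : V} (hs : outdeg tail s = 0)
    (hglobal : ∀ v : V, Relation.ReflTransGen (fun a b => ∃ e, tail e = a ∧ head e = b) v s)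
    (σ : NonSink tail → ℕ) :
    ¬ ∃ τ : ℕ → (NonSink tail → ℕ), τ 0 = σ ∧ ∀ n, FiringStep tail head (τ n) (τ (n + 1)) := by
  rintro ⟨τ, -, hτ⟩
  choose v hact hfire using hτ
  have := Fintype.ofFinite (NonSink tail)
  obtain ⟨a, ha⟩ := frequently_exists.1 (Frequently.of_forall fun n => ⟨v n, rfl⟩ :
    ∃ᶠ n in atTop, ∃ a, v n = a)
  exact not_frequently_fire_of_path_to_sink hact hfire hs (hglobal a.1)
    (ha.mono fun n hn => congrArg Subtype.val hn)

section Stabilization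

variable {V E : Type} [Fintype E] [DecidableEq V] {tail head : E → V}

theorem wellFounded_flip_firingStep
    (h : ∀ σ, ¬ ∃ τ : ℕ → (NonSink tail → ℕ), τ 0 = σ ∧
      ∀ n, FiringStep tail head (τ n) (τ (n + 1))) :
    WellFounded (flip (FiringStep tail head)) :=
  wellFounded_iff_isEmpty_descending_chain.2 ⟨fun ⟨τ, hτ⟩ => h (τ 0) ⟨τ, rfl, hτ⟩⟩

theorem exists_legal_stable_of_wellFounded (hwf : WellFounded (flip (FiringStep tail head)))
    (σ : NonSink tail → ℕ) :
    ∃ l, Legal tail head σ l ∧ Stable tail (fireList tail head σ l) := by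
  induction σ using hwf.induction with
  | _ σ ih =>
    by_cases hst : Stable tail σ
    · exact ⟨[], trivial, hst⟩
    obtain ⟨v, hv⟩ : ∃ v, Active tail σ v := by simpa [Stable, Active] using hst
    obtain ⟨l, hl, hstab⟩ := ih _ ⟨v, hv, rfl⟩
    exact ⟨v :: l, ⟨hv, hl⟩, hstab⟩

end Stabilization

theorem every_configuration_stabilizes_general
    {V E : Type} [DecidableEq V] [Fintype E]
    (tail head : E → V)
    (s : V) (hs : outdeg tail s = 0)
    (hglobal : ∀ v : V,
      Relation.ReflTransGen (fun a b => ∃ e, tail e = a ∧ head e = b) v s)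
    (σ : NonSink tail → ℕ) :
    (∃ l : List (NonSink tail),
        Legal tail head σ l ∧ Stable tail (fireList tail head σ l)) ∧
      ¬ ∃ τ : ℕ → (NonSink tail → ℕ), τ 0 = σ ∧
          ∀ n, ∃ v, Active tail (τ n) v ∧ τ (n + 1) = fire tail head (τ n) v := by
  have hfinite := not_exists_infinite_firing hs hglobal
  exact ⟨exists_legal_stable_of_wellFounded (wellFounded_flip_firingStep hfinite) σ, hfinite σ⟩

/-- **Stabilization.** If the digraph has a global sink `s` (a sink reachable from
every vertex by a directed path), then from every chip configuration some finite
legal sequence of firings of active vertices reaches a stable configuration; and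
consequently there is no infinite sequence of firings of active vertices. -/
theorem every_configuration_stabilizes
    {V E : Type} [Fintype V] [DecidableEq V] [Fintype E]
    (tail head : E → V)
    (s : V) (hs : outdeg tail s = 0)
    (hglobal : ∀ v : V,
      Relation.ReflTransGen (fun a b => ∃ e, tail e = a ∧ head e = b) v s)
    (σ : NonSink tail → ℕ) :
    (∃ l : List (NonSink tail),
        Legal tail head σ l ∧ Stable tail (fireList tail head σ l)) ∧
      ¬ ∃ τ : ℕ → (NonSink tail → ℕ), τ 0 = σ ∧
          ∀ n, ∃ v, Active tail (τ n) v ∧ τ (n + 1) = fire tail head (τ n) v :=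
  every_configuration_stabilizes_general tail head s hs hglobal σ
end

section
/- Let G be a sink-free digraph with a fixed cyclic ordering of the outgoing edges at each vertex. The rotor-router operation is a permutation of the set of unicycles of G. -/
/-!
Let `f = succMap ρ` be the successor map of the rotors, so that `(w, ρ)` is a unicycle exactly
when `w` lies on the unique cycle of the functional graph of `f`. A rotor-router step replaces
`f` by `g = update f w c` and moves the chip to `g w`. Redirecting the out-edge of a vertex `w`
on the unique cycle leaves a unique cycle, now through `w`: a periodic point of `g` whose orbit
never met `w` would be periodic for `f`, hence on the old cycle, whose orbit does pass through
`w`. On unicycles the step is injective, because `g` is injective on its periodic points, which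
recovers `w` from `g w`, and `next` is injective, which recovers `ρ w`. An injective self-map
of a finite set is a bijection.
-/

/-- Rotor configurations: an outgoing edge at each vertex. -/
abbrev RotorConfig {V E : Type} (tail : E → V) : Type :=
  {ρ : V → E // ∀ v, tail (ρ v) = v}

/-- The rotor-router operation on single-chip-and-rotor states `(w, ρ)`: the rotor at
the chip's position `w` is advanced to the next edge `next (ρ w)` in the cyclic
ordering of outgoing edges at `w`, and the chip moves to the head of that edge. -/
def rotorStep {V E : Type} [DecidableEq V] (tail head : E → V) (next : E → E)
    (hnext : ∀ e, tail (next e) = tail e)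
    (p : V × RotorConfig tail) : V × RotorConfig tail :=
  (head (next (p.2.1 p.1)),
   ⟨Function.update p.2.1 p.1 (next (p.2.1 p.1)), by
      intro u
      rcases eq_or_ne u p.1 with h | h
      · subst h
        rw [Function.update_self, hnext]
        exact p.2.2 p.1
      · rw [Function.update_of_ne h]
        exact p.2.2 u⟩)

/-- The vertex-successor map of a rotor configuration: follow the rotor for one step. -/
def succMap {V E : Type} (tail : E → V) (head : E → V) (ρ : RotorConfig tail) : V → V :=
  fun v => head (ρ.1 v)

/-- `(w, ρ)` is a unicycle: the set of rotor edges `{ρ(v)}` contains a unique directed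
cycle, and the chip position `w` lies on this cycle.  Equivalently, `w` is a periodic
point of the successor map, and every periodic point lies on the forward orbit of `w`. -/
def Unicycle {V E : Type} (tail head : E → V) (p : V × RotorConfig tail) : Prop :=
  (∃ k, 0 < k ∧ (succMap tail head p.2)^[k] p.1 = p.1) ∧
  ∀ v : V, (∃ k, 0 < k ∧ (succMap tail head p.2)^[k] v = v) →
    ∃ j, (succMap tail head p.2)^[j] p.1 = v

open Function Set

namespace Function

variable {α : Type*} {f : α → α}

theorem exists_iterate_mem_periodicPts [Finite α] (f : α → α) (x : α) :
    ∃ n, f^[n] x ∈ periodicPts f := by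
  obtain ⟨i, j, hij, heq⟩ := Finite.exists_ne_map_eq_of_infinite (f^[·] x)
  have key : ∀ {i j : ℕ}, i < j → f^[i] x = f^[j] x → f^[i] x ∈ periodicPts f :=
    fun {i j} hlt heq => mk_mem_periodicPts (Nat.sub_pos_of_lt hlt) <| by
      rw [IsPeriodicPt, IsFixedPt, ← iterate_add_apply, Nat.sub_add_cancel hlt.le, heq]
  rcases hij.lt_or_gt with hlt | hlt
  · exact ⟨i, key hlt heq⟩
  · exact ⟨j, key hlt heq.symm⟩

theorem iterate_mem_periodicPts {x : α} (hx : x ∈ periodicPts f) (n : ℕ) :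
    f^[n] x ∈ periodicPts f :=
  (bijOn_periodicPts f).mapsTo.iterate n hx

theorem exists_iterate_iterate_eq_of_mem_periodicPts {x : α} (hx : x ∈ periodicPts f) (n : ℕ) :
    ∃ m, f^[m] (f^[n] x) = x := by
  obtain ⟨r, hr, hrx⟩ := hx
  refine ⟨(r - 1) * n, ?_⟩
  have hperiod : (r - 1) * n + n = r * n := by
    rw [← Nat.succ_mul, Nat.succ_eq_add_one, Nat.sub_add_cancel hr]
  rw [← iterate_add_apply, hperiod, iterate_mul]
  exact iterate_fixed hrx n

theorem iterate_update_eq_iterate_of_forall_ne [DecidableEq α] {w c u : α} {n : ℕ}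
    (h : ∀ k < n, (update f w c)^[k] u ≠ w) : (update f w c)^[n] u = f^[n] u := by
  induction n with
  | zero => rfl
  | succ n ih =>
    have ih := ih fun k hk => h k (Nat.lt_succ_of_lt hk)
    rw [iterate_succ_apply', iterate_succ_apply', update_of_ne (h n n.lt_succ_self), ih]

def IsOnUniqueCycle (f : α → α) (w : α) : Prop :=
  w ∈ periodicPts f ∧ periodicPts f ⊆ range (f^[·] w)

namespace IsOnUniqueCycle

variable {w : α}

theorem apply (h : IsOnUniqueCycle f w) : IsOnUniqueCycle f (f w) := by
  refine ⟨iterate_mem_periodicPts h.1 1, fun v hv => ?_⟩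
  obtain ⟨j, rfl⟩ := h.2 hv
  obtain ⟨m, hm⟩ := exists_iterate_iterate_eq_of_mem_periodicPts h.1 1
  exact ⟨j + m, show f^[j + m] (f w) = f^[j] w by rw [iterate_add_apply]; exact congrArg _ hm⟩

theorem update [Finite α] [DecidableEq α] (h : IsOnUniqueCycle f w) (c : α) :
    IsOnUniqueCycle (update f w c) w := by
  set g := Function.update f w c
  have reaches_w : ∀ v ∈ periodicPts g, ∃ i, g^[i] v = w := by
    intro v hv
    by_contra! hvw
    have hfg : ∀ n, g^[n] v = f^[n] v := fun n =>
      iterate_update_eq_iterate_of_forall_ne fun k _ => hvw k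
    have hvf : v ∈ periodicPts f := by
      obtain ⟨r, hr, hrv⟩ := hv
      exact ⟨r, hr, (hfg r).symm.trans hrv⟩
    obtain ⟨j, rfl⟩ := h.2 hvf
    obtain ⟨m, hm⟩ := exists_iterate_iterate_eq_of_mem_periodicPts h.1 j
    exact hvw m ((hfg m).trans hm)
  have hw : w ∈ periodicPts g := by
    obtain ⟨n, hn⟩ := exists_iterate_mem_periodicPts g w
    obtain ⟨i, hi⟩ := reaches_w _ hn
    exact hi ▸ iterate_mem_periodicPts hn i
  refine ⟨hw, fun v hv => ?_⟩
  obtain ⟨i, hi⟩ := reaches_w v hv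
  obtain ⟨m, hm⟩ := exists_iterate_iterate_eq_of_mem_periodicPts hv i
  exact ⟨m, hi ▸ hm⟩

end IsOnUniqueCycle

end Function

section RotorRouter

variable {V E : Type} {tail head : E → V}

theorem unicycle_iff {p : V × RotorConfig tail} :
    Unicycle tail head p ↔ IsOnUniqueCycle (succMap tail head p.2) p.1 :=
  Iff.rfl

variable [DecidableEq V] {next : E → E} {hnext : ∀ e, tail (next e) = tail e}

theorem succMap_rotorStep (p : V × RotorConfig tail) :
    succMap tail head (rotorStep tail head next hnext p).2 =
      update (succMap tail head p.2) p.1 (head (next (p.2.1 p.1))) := by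
  funext v
  rcases eq_or_ne v p.1 with rfl | hv
  · simp [succMap, rotorStep]
  · simp [succMap, rotorStep, update_of_ne hv]

theorem rotorStep_fst (p : V × RotorConfig tail) :
    (rotorStep tail head next hnext p).1 =
      succMap tail head (rotorStep tail head next hnext p).2 p.1 := by
  rw [succMap_rotorStep, update_self]
  rfl

theorem Unicycle.isOnUniqueCycle_succMap_rotorStep [Finite V] {p : V × RotorConfig tail}
    (hp : Unicycle tail head p) :
    IsOnUniqueCycle (succMap tail head (rotorStep tail head next hnext p).2) p.1 :=
  succMap_rotorStep p ▸ (unicycle_iff.mp hp).update _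

theorem Unicycle.rotorStep [Finite V] {p : V × RotorConfig tail} (hp : Unicycle tail head p) :
    Unicycle tail head (rotorStep tail head next hnext p) := by
  rw [unicycle_iff, rotorStep_fst]
  exact hp.isOnUniqueCycle_succMap_rotorStep.apply

theorem rotorStep_injOn_unicycle [Finite V] (hinj : Injective next) :
    InjOn (rotorStep tail head next hnext) {p | Unicycle tail head p} := by
  intro p (hp : Unicycle tail head p) q (hq : Unicycle tail head q) hpq
  have hpg := (hp.isOnUniqueCycle_succMap_rotorStep (next := next) (hnext := hnext)).1
  have hqg := (hq.isOnUniqueCycle_succMap_rotorStep (next := next) (hnext := hnext)).1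
  rw [← hpq] at hqg
  have hw : p.1 = q.1 := (bijOn_periodicPts _).injOn hpg hqg <| by
    rw [← rotorStep_fst, hpq, rotorStep_fst]
  have hrotor := congrArg (fun r => r.2.1) hpq
  simp only [rotorStep, ← hw] at hrotor
  refine Prod.ext hw (Subtype.ext (funext fun v => ?_))
  rcases eq_or_ne v p.1 with rfl | hv
  · exact hinj (by simpa using congrFun hrotor p.1)
  · simpa [update_of_ne hv] using congrFun hrotor v

end RotorRouter

theorem rotor_router_permutes_unicycles_general
    {V E : Type} [Fintype V] [DecidableEq V] [Fintype E]
    (tail head : E → V) (next : E → E)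
    (hnext : ∀ e, tail (next e) = tail e)
    (hcyc : ∀ e e' : E, tail e = tail e' → ∃ k, next^[k] e = e') :
    Set.BijOn (rotorStep tail head next hnext)
      {p : V × RotorConfig tail | Unicycle tail head p}
      {p : V × RotorConfig tail | Unicycle tail head p} := by
  have hinj : Injective next := Finite.injective_iff_surjective.mpr fun e => by
    obtain ⟨k, hk⟩ := hcyc (next e) e (hnext e)
    exact ⟨next^[k] e, by rw [← iterate_succ_apply' next, iterate_succ_apply, hk]⟩
  exact (Set.toFinite _).injOn_iff_bijOn_of_mapsTo (fun _ hp => Unicycle.rotorStep hp)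
    |>.mp (rotorStep_injOn_unicycle hinj)

/-- **Rotor-router permutes unicycles.**  For a sink-free digraph with a fixed cyclic
ordering of the outgoing edges at each vertex, the rotor-router operation is a
permutation of the set of unicycles. -/
theorem rotor_router_permutes_unicycles
    {V E : Type} [Fintype V] [DecidableEq V] [Fintype E] [DecidableEq E]
    (tail head : E → V) (next : E → E)
    (hnext : ∀ e, tail (next e) = tail e)
    (hcyc : ∀ e e' : E, tail e = tail e' → ∃ k, next^[k] e = e')
    (hsinkfree : ∀ v : V, ∃ e : E, tail e = v) :
    Set.BijOn (rotorStep tail head next hnext)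
      {p : V × RotorConfig tail | Unicycle tail head p}
      {p : V × RotorConfig tail | Unicycle tail head p} :=
  rotor_router_permutes_unicycles_general tail head next hnext hcyc
end

section
/- Let G be an Eulerian digraph with m edges, with a fixed cyclic ordering of the outgoing edges at each vertex, and let U = (w, ρ) be a unicycle on G. Iterating the rotor-router operation m times starting from U, the chip traverses an Eulerian tour of G (each directed edge of G is traversed exactly once), each rotor makes exactly one full turn, and the state returns to U. -/
/-- The in-degree of a vertex. -/
def indeg {V E : Type} [Fintype E] [DecidableEq V] (head : E → V) (v : V) : ℕ :=
  (Finset.univ.filter (fun e => head e = v)).card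

open Function Finset

theorem Finite.exists_first_repeat {α : Type*} [Finite α] (f : ℕ → α) :
    ∃ b, Set.InjOn f (range b) ∧ ∃ a < b, f a = f b := by
  classical
  have hrep : ∃ b, ∃ a < b, f a = f b := by
    obtain ⟨a, b, hab, h⟩ := Set.finite_univ.exists_lt_map_eq_of_forall_mem (f := f)
      (fun _ => Set.mem_univ _)
    exact ⟨b, a, hab, h⟩
  refine ⟨Nat.find hrep, fun i hi j hj hij => ?_, Nat.find_spec hrep⟩
  rw [coe_range, Set.mem_Iio] at hi hj
  by_contra hne
  rcases lt_or_gt_of_ne hne with h | h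
  · exact Nat.find_min hrep hj ⟨i, h, hij⟩
  · exact Nat.find_min hrep hi ⟨j, h, hij.symm⟩

theorem Function.exists_iterate_eq_of_forall_mem_periodicPts {α : Type*} [Finite α]
    {f : α → α} {w : α} (hw : w ∈ periodicPts f)
    (hcycle : ∀ v ∈ periodicPts f, ∃ j, f^[j] w = v) (u : α) : ∃ n, f^[n] u = w := by
  obtain ⟨m, n, hmn, hmn_eq⟩ := Set.finite_univ.exists_lt_map_eq_of_forall_mem
    (f := (f^[·] u)) (fun _ => Set.mem_univ _)
  have hperiodic : f^[m] u ∈ periodicPts f := by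
    refine mk_mem_periodicPts (Nat.sub_pos_of_lt hmn) ?_
    change f^[n - m] (f^[m] u) = f^[m] u
    rw [← iterate_add_apply, Nat.sub_add_cancel hmn.le, hmn_eq]
  obtain ⟨j, hj⟩ := hcycle _ hperiodic
  obtain ⟨k, hk, hkw⟩ := hw
  obtain ⟨k, rfl⟩ := Nat.exists_eq_add_one_of_ne_zero hk.ne'
  refine ⟨k * j + m, ?_⟩
  rw [iterate_add_apply, ← hj, ← iterate_add_apply, ← Nat.add_one_mul]
  exact (hkw.mul_const j).eq

theorem mem_of_card_filter_univ_le {V E : Type} [Fintype E] [DecidableEq V] {f : E → V}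
    {T : Finset E} {v : V} (h : #{e | f e = v} ≤ #{e ∈ T | f e = v}) {e : E} (he : f e = v) :
    e ∈ T := by
  have hfilter := eq_of_subset_of_card_le (filter_subset_filter _ (subset_univ T)) h
  have he' : e ∈ T.filter (f · = v) := by rw [hfilter]; exact mem_filter.2 ⟨mem_univ e, he⟩
  exact (mem_filter.1 he').1

theorem RotorConfig.injective {V E : Type} {tail : E → V} (ρ : RotorConfig tail) :
    Injective ρ.1 :=
  LeftInverse.injective ρ.2

section CyclicOrder

def IsCyclicOrdering {V E : Type} (tail : E → V) (next : E → E) : Prop :=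
  ∀ e e' : E, tail e = tail e' → ∃ k, next^[k] e = e'

variable {V E : Type} {tail : E → V} {next : E → E}

theorem tail_iterate_next (hnext : ∀ e, tail (next e) = tail e) (k : ℕ) (e : E) :
    tail (next^[k] e) = tail e :=
  Iterate.rec (fun e' => tail e' = tail e) rfl (fun e' h => (hnext e').trans h) k

theorem mem_periodicPts_next (hnext : ∀ e, tail (next e) = tail e)
    (hcyc : IsCyclicOrdering tail next) (e : E) :
    e ∈ periodicPts next := by
  obtain ⟨k, hk⟩ := hcyc (next e) e (hnext e)
  exact mk_mem_periodicPts k.succ_pos hk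

theorem minimalPeriod_next_eq_outdeg [Fintype E] [DecidableEq V]
    (hnext : ∀ e, tail (next e) = tail e) (hcyc : IsCyclicOrdering tail next) (e : E) :
    minimalPeriod next e = outdeg tail (tail e) := by
  classical
  have horbit : (range (minimalPeriod next e)).image (next^[·] e) =
      univ.filter (fun e' => tail e' = tail e) := by
    ext e'
    simp only [mem_image, mem_range, mem_filter, mem_univ, true_and]
    constructor
    · rintro ⟨k, -, rfl⟩
      exact tail_iterate_next hnext k e
    · intro he'
      obtain ⟨k, rfl⟩ := hcyc e e' he'.symm
      exact ⟨k % minimalPeriod next e,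
        Nat.mod_lt _ (minimalPeriod_pos_of_mem_periodicPts (mem_periodicPts_next hnext hcyc e)),
        iterate_mod_minimalPeriod_eq⟩
  rw [outdeg, ← horbit, card_image_of_injOn, card_range]
  rw [coe_range]
  exact iterate_injOn_Iio_minimalPeriod

theorem iterate_outdeg [Fintype E] [DecidableEq V] (hnext : ∀ e, tail (next e) = tail e)
    (hcyc : IsCyclicOrdering tail next) (e : E) :
    next^[outdeg tail (tail e)] e = e := by
  rw [← minimalPeriod_next_eq_outdeg hnext hcyc]
  exact iterate_minimalPeriod

theorem outdeg_add_le_of_iterate_eq [Fintype E] [DecidableEq V]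
    (hnext : ∀ e, tail (next e) = tail e) (hcyc : IsCyclicOrdering tail next) {e : E} {k n : ℕ}
    (hkn : k < n) (h : next^[k] e = next^[n] e) : outdeg tail (tail e) + k ≤ n := by
  have hperiodic : IsPeriodicPt next (n - k) e := by
    refine isPeriodicPt_of_mem_periodicPts_of_isPeriodicPt_iterate
      (mem_periodicPts_next hnext hcyc e) (n := k) ?_
    change next^[n - k] (next^[k] e) = next^[k] e
    rw [← iterate_add_apply, Nat.sub_add_cancel hkn.le, h]
  have := hperiodic.minimalPeriod_le (Nat.sub_pos_of_lt hkn)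
  rw [minimalPeriod_next_eq_outdeg hnext hcyc] at this
  omega

end CyclicOrder

section RotorWalk

variable {V E : Type} [DecidableEq V] (tail head : E → V) (next : E → E)
  (hnext : ∀ e, tail (next e) = tail e) (p : V × RotorConfig tail)

def chipAt (n : ℕ) : V := ((rotorStep tail head next hnext)^[n] p).1

def rotorAt (n : ℕ) : V → E := ((rotorStep tail head next hnext)^[n] p).2.1

def edgeAt (n : ℕ) : E :=
  next (rotorAt tail head next hnext p n (chipAt tail head next hnext p n))

def exitCount (n : ℕ) (v : V) : ℕ := #{i ∈ range n | chipAt tail head next hnext p i = v}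

variable {tail head next hnext p}

local notation "chip" => chipAt tail head next hnext p
local notation "rotor" => rotorAt tail head next hnext p
local notation "edge" => edgeAt tail head next hnext p
local notation "exits" => exitCount tail head next hnext p

theorem chipAt_succ (n : ℕ) : chip (n + 1) = head (edge n) := by
  rw [chipAt, iterate_succ_apply']
  rfl

theorem rotorAt_succ (n : ℕ) : rotor (n + 1) = update (rotor n) (chip n) (edge n) := by
  rw [rotorAt, iterate_succ_apply']
  rfl

theorem exitCount_succ (n : ℕ) (v : V) :
    exits (n + 1) v = exits n v + if chip n = v then 1 else 0 := by
  simp only [exitCount, card_filter, sum_range_succ]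

theorem exitCount_mono (v : V) : Monotone (exits · v) :=
  fun _ _ hmn => card_le_card (filter_subset_filter _ (range_subset_range.2 hmn))

theorem rotorAt_eq_iterate (n : ℕ) (v : V) : rotor n v = next^[exits n v] (p.2.1 v) := by
  induction n with
  | zero => rfl
  | succ n ih =>
    rw [rotorAt_succ, exitCount_succ]
    by_cases hv : chip n = v
    · subst hv
      rw [update_self, if_pos rfl, iterate_succ_apply', ← ih]
      rfl
    · rw [update_of_ne (Ne.symm hv), if_neg hv, add_zero, ih]

theorem edgeAt_eq_iterate (n : ℕ) :
    edge n = next^[exits (n + 1) (chip n)] (p.2.1 (chip n)) := by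
  rw [exitCount_succ, if_pos rfl, iterate_succ_apply', ← rotorAt_eq_iterate]
  rfl

theorem tail_edgeAt (n : ℕ) : tail (edge n) = chip n := by
  rw [edgeAt_eq_iterate, tail_iterate_next hnext, p.2.2]

theorem exitCount_succ_eq_entries (n : ℕ) (v : V) :
    exits (n + 1) v = (if p.1 = v then 1 else 0) + #{i ∈ range n | head (edge i) = v} := by
  simp only [exitCount, card_filter, sum_range_succ', ← chipAt_succ]
  rw [add_comm]
  rfl

variable {b : ℕ}

theorem card_filter_image_edgeAt [DecidableEq E] (hinj : Set.InjOn edge (range b))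
    (P : E → Prop) [DecidablePred P] :
    #{e ∈ (range b).image edge | P e} = #{i ∈ range b | P (edge i)} := by
  rw [filter_image, card_image_of_injOn (hinj.mono (coe_subset.2 (filter_subset _ _)))]

theorem card_filter_tail_image [DecidableEq E] (hinj : Set.InjOn edge (range b)) (v : V) :
    #{e ∈ (range b).image edge | tail e = v} = exits b v := by
  simp only [card_filter_image_edgeAt hinj, tail_edgeAt, exitCount]

theorem card_filter_head_image [DecidableEq E] (hinj : Set.InjOn edge (range b))
    (hb : chip b = p.1) (v : V) : #{e ∈ (range b).image edge | head e = v} = exits b v := by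
  have hentries : exits (b + 1) v = _ := exitCount_succ_eq_entries b v
  rw [exitCount_succ, hb, ← card_filter_image_edgeAt hinj (head · = v)] at hentries
  omega

theorem exitCount_le_outdeg [DecidableEq E] [Fintype E] (hinj : Set.InjOn edge (range b))
    (v : V) : exits b v ≤ outdeg tail v :=
  card_filter_tail_image hinj v ▸ card_le_card (filter_subset_filter _ (subset_univ _))

theorem outdeg_add_le_exitCount [Fintype E] (hcyc : IsCyclicOrdering tail next)
    {i k : ℕ} (hk : k < exits (i + 1) (chip i)) (h : next^[k] (p.2.1 (chip i)) = edge i) :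
    outdeg tail (chip i) + k ≤ exits (i + 1) (chip i) := by
  rw [edgeAt_eq_iterate] at h
  simpa only [p.2.2] using outdeg_add_le_of_iterate_eq hnext hcyc hk h

theorem outdeg_le_exitCount_of_edgeAt_eq [Fintype E]
    (hcyc : IsCyclicOrdering tail next) {a : ℕ} (hab : a < b)
    (h : edge a = edge b) : outdeg tail (chip b) ≤ exits b (chip b) := by
  have hchip : chip a = chip b := by simpa only [tail_edgeAt] using congrArg tail h
  have hpos : 0 < exits (a + 1) (chip b) := by rw [exitCount_succ, if_pos hchip]; omega
  have hmono : exits (a + 1) (chip b) ≤ exits b (chip b) := exitCount_mono _ hab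
  have hsucc : exits (b + 1) (chip b) = exits b (chip b) + 1 := by
    rw [exitCount_succ, if_pos rfl]
  have hiter : next^[exits (a + 1) (chip b)] (p.2.1 (chip b)) = edge b := by
    rw [← h, edgeAt_eq_iterate, hchip]
  have := outdeg_add_le_exitCount hcyc (by omega) hiter
  omega

theorem chipAt_eq_start_of_edgeAt_eq [DecidableEq E] [Fintype E]
    (hcyc : IsCyclicOrdering tail next)
    (hbal : ∀ v : V, indeg head v = outdeg tail v) (hinj : Set.InjOn edge (range b)) {a : ℕ}
    (hab : a < b) (h : edge a = edge b) : chip b = p.1 := by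
  by_contra hne
  have hentries : exits (b + 1) (chip b) = _ := exitCount_succ_eq_entries b (chip b)
  rw [exitCount_succ, if_pos rfl, if_neg (Ne.symm hne),
    ← card_filter_image_edgeAt hinj (head · = chip b)] at hentries
  have hin_le : #{e ∈ (range b).image edge | head e = chip b} ≤ indeg head (chip b) :=
    card_le_card (filter_subset_filter _ (subset_univ _))
  have := outdeg_le_exitCount_of_edgeAt_eq hcyc hab h
  have := hbal (chip b)
  omega

theorem exitCount_eq_outdeg_of_rotor_mem [DecidableEq E] [Fintype E]
    (hcyc : IsCyclicOrdering tail next)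
    (hinj : Set.InjOn edge (range b)) {v : V} (hv : p.2.1 v ∈ (range b).image edge) :
    exits b v = outdeg tail v := by
  obtain ⟨i, hi, hiv⟩ := mem_image.1 hv
  have hchip : chip i = v := by simpa only [tail_edgeAt, p.2.2] using congrArg tail hiv
  have hpos : 0 < exits (i + 1) (chip i) := by rw [exitCount_succ, if_pos rfl]; omega
  have hiter : next^[0] (p.2.1 (chip i)) = edge i := by rw [hchip, hiv]; rfl
  have hturn := outdeg_add_le_exitCount hcyc hpos hiter
  have hmono : exits (i + 1) v ≤ exits b v := exitCount_mono v (mem_range.1 hi)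
  have := exitCount_le_outdeg hinj v
  rw [hchip] at hturn
  omega

theorem mem_image_of_exitCount_eq_outdeg [DecidableEq E] [Fintype E]
    (hbal : ∀ v : V, indeg head v = outdeg tail v) (hinj : Set.InjOn edge (range b))
    (hb : chip b = p.1) {v : V} (hv : exits b v = outdeg tail v) {e : E} (he : head e = v) :
    e ∈ (range b).image edge :=
  mem_of_card_filter_univ_le (by rw [card_filter_head_image hinj hb, hv, ← hbal]; rfl) he

theorem exitCount_eq_outdeg_of_edgeAt_eq [DecidableEq E] [Fintype E] [Finite V]
    (hcyc : IsCyclicOrdering tail next)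
    (hbal : ∀ v : V, indeg head v = outdeg tail v) (hp : Unicycle tail head p)
    (hinj : Set.InjOn edge (range b)) {a : ℕ} (hab : a < b) (h : edge a = edge b) (u : V) :
    exits b u = outdeg tail u := by
  have hb := chipAt_eq_start_of_edgeAt_eq hcyc hbal hinj hab h
  obtain ⟨n, hn⟩ := exists_iterate_eq_of_forall_mem_periodicPts hp.1 hp.2 u
  induction n generalizing u with
  | zero =>
    obtain rfl : u = p.1 := hn
    exact le_antisymm (exitCount_le_outdeg hinj _)
      (hb ▸ outdeg_le_exitCount_of_edgeAt_eq hcyc hab h)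
  | succ n ih =>
    exact exitCount_eq_outdeg_of_rotor_mem hcyc hinj
      (mem_image_of_exitCount_eq_outdeg hbal hinj hb (ih _ hn) rfl)

theorem eq_card_of_exitCount_eq_outdeg [DecidableEq E] [Fintype E]
    (hinj : Set.InjOn edge (range b)) (hexits : ∀ u, exits b u = outdeg tail u) :
    b = Fintype.card E := by
  have himage : (range b).image edge = univ := eq_univ_of_forall fun e =>
    mem_of_card_filter_univ_le (by rw [card_filter_tail_image hinj, hexits]; rfl) rfl
  rw [← card_range b, ← card_image_of_injOn hinj, himage, card_univ]

end RotorWalk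

theorem unicycle_eulerian_tour_general
    {V E : Type} [DecidableEq V] [Fintype E]
    (tail head : E → V) (next : E → E)
    (hnext : ∀ e, tail (next e) = tail e)
    (hcyc : ∀ e e' : E, tail e = tail e' → ∃ k, next^[k] e = e')
    (hbal : ∀ v : V, indeg head v = outdeg tail v)
    (p : V × RotorConfig tail) (hp : Unicycle tail head p) :
    (rotorStep tail head next hnext)^[Fintype.card E] p = p ∧
    Function.Bijective (fun k : Fin (Fintype.card E) =>
      next ((((rotorStep tail head next hnext)^[k.1] p).2).1
        (((rotorStep tail head next hnext)^[k.1] p).1))) ∧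
    ∀ v : V,
      (Finset.univ.filter (fun k : Fin (Fintype.card E) =>
          (((rotorStep tail head next hnext)^[k.1] p).1 = v))).card
        = outdeg tail v := by
  classical
  have : Finite V := Finite.of_injective _ (RotorConfig.injective p.2)
  obtain ⟨b, hinj, a, hab, hrepeat⟩ :=
    Finite.exists_first_repeat (edgeAt tail head next hnext p)
  have hexits := exitCount_eq_outdeg_of_edgeAt_eq hcyc hbal hp hinj hab hrepeat
  have hstart := chipAt_eq_start_of_edgeAt_eq hcyc hbal hinj hab hrepeat
  obtain rfl := eq_card_of_exitCount_eq_outdeg hinj hexits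
  refine ⟨Prod.ext hstart (Subtype.ext (funext fun v => ?_)), ?_, fun v => ?_⟩
  · change rotorAt tail head next hnext p (Fintype.card E) v = p.2.1 v
    rw [rotorAt_eq_iterate, hexits]
    simpa only [p.2.2] using iterate_outdeg hnext hcyc (p.2.1 v)
  · exact (Fintype.bijective_iff_injective_and_card _).2
      ⟨fun i j hij => Fin.ext (hinj (by simp) (by simp) hij), Fintype.card_fin _⟩
  · rw [← hexits v, exitCount, card_filter, card_filter]
    exact Fin.sum_univ_eq_sum_range (if chipAt tail head next hnext p · = v then 1 else 0) _

/-- **Unicycles traverse Eulerian tours.**  Let `G` be an Eulerian digraph with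
`m` edges and a fixed cyclic ordering of the outgoing edges at each vertex, and let
`(w, ρ)` be a unicycle.  Iterating the rotor-router operation `m` times: the state
returns to `(w, ρ)`; the chip traverses each directed edge of `G` exactly once (an
Eulerian tour, since consecutive traversed edges are automatically incident); and
each rotor makes exactly one full turn, i.e. the chip is emitted from each vertex `v`
exactly `d_v` times. -/
theorem unicycle_eulerian_tour
    {V E : Type} [Fintype V] [DecidableEq V] [Fintype E] [DecidableEq E]
    (tail head : E → V) (next : E → E)
    (hnext : ∀ e, tail (next e) = tail e)
    (hcyc : ∀ e e' : E, tail e = tail e' → ∃ k, next^[k] e = e')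
    (hsc : ∀ u v : V,
      Relation.ReflTransGen (fun a b => ∃ e, tail e = a ∧ head e = b) u v)
    (hbal : ∀ v : V, indeg head v = outdeg tail v)
    (p : V × RotorConfig tail) (hp : Unicycle tail head p) :
    (rotorStep tail head next hnext)^[Fintype.card E] p = p ∧
    Function.Bijective (fun k : Fin (Fintype.card E) =>
      next ((((rotorStep tail head next hnext)^[k.1] p).2).1
        (((rotorStep tail head next hnext)^[k.1] p).1))) ∧
    ∀ v : V,
      (Finset.univ.filter (fun k : Fin (Fintype.card E) =>
          (((rotorStep tail head next hnext)^[k.1] p).1 = v))).card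
        = outdeg tail v :=
  unicycle_eulerian_tour_general tail head next hnext hcyc hbal p hp
end
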